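/- Let λ ≠ 0, k ≠ 0, and A be real constants. The function u(x,t) = (A e^{λ k t}/x − 1/(λ k x))^{−1/k} satisfies u_t + u^k·u_x + λ·u = 0 at every point (x,t) with x ≠ 0 at which the base A e^{λ k t}/x − 1/(λ k x) is positive. -/

import Mathlib

open Real

/-!
Writing `u = b ^ (-1/k)`, one has `u ^ k = b⁻¹`, and the equation for `u` becomes the first
order equation `b b_t + b_x = λ k b²` for the base. The base is `c(t) / x` with
`c(t) = A e^{λkt} - 1/(λk)`, and `c' = λ k c + 1` is exactly what makes `c(t)/x` solve it.
-/

/-- `u_t + u^k u_x + λ u` at `p = (x, t)`. -/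
noncomputable def dampedBurgersResidual (lam k : ℝ) (u : ℝ × ℝ → ℝ) (p : ℝ × ℝ) : ℝ :=
  fderiv ℝ u p (0, 1) + u p ^ k * fderiv ℝ u p (1, 0) + lam * u p

theorem dampedBurgersResidual_rpow_neg_inv {lam k : ℝ} {g : ℝ × ℝ → ℝ} {L : ℝ × ℝ →L[ℝ] ℝ}
    {p : ℝ × ℝ} (hk : k ≠ 0) (hg : HasFDerivAt g L p) (hpos : 0 < g p) :
    dampedBurgersResidual lam k (fun q => g q ^ (-(1 / k))) p =
      -(1 / k) * g p ^ (-(1 / k) - 2) * (g p * L (0, 1) + L (1, 0) - lam * k * g p ^ 2) := by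
  have hb : g p ≠ 0 := hpos.ne'
  have hpow_one : g p ^ (-(1 / k) - 1) = g p ^ (-(1 / k) - 2) * g p := by
    rw [← rpow_add_one hb]; ring_nf
  have hpow_two : g p ^ (-(1 / k)) = g p ^ (-(1 / k) - 2) * g p ^ 2 := by
    rw [← rpow_natCast, ← rpow_add hpos]; ring_nf
  have hpow_k : (g p ^ (-(1 / k))) ^ k = (g p)⁻¹ := by
    rw [← rpow_mul hpos.le, show -(1 / k) * k = -1 by field_simp, rpow_neg_one]
  rw [dampedBurgersResidual, (hg.rpow_const (Or.inl hb)).fderiv]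
  simp only [smul_apply, smul_eq_mul]
  rw [hpow_k, hpow_one, hpow_two]
  field_simp
  ring

theorem hasFDerivAt_div_fst_of_hasDerivAt {c : ℝ → ℝ} {c' x t : ℝ} (hc : HasDerivAt c c' t)
    (hx : x ≠ 0) :
    HasFDerivAt (fun p : ℝ × ℝ => c p.2 / p.1)
      ((c' / x) • ContinuousLinearMap.snd ℝ ℝ ℝ - (c t / x ^ 2) • ContinuousLinearMap.fst ℝ ℝ ℝ)
      (x, t) := by
  have hnum : HasFDerivAt (fun p : ℝ × ℝ => c p.2) (c' • ContinuousLinearMap.snd ℝ ℝ ℝ) (x, t) :=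
    hc.comp_hasFDerivAt (x, t) hasFDerivAt_snd
  have hinv : HasFDerivAt (fun p : ℝ × ℝ => p.1⁻¹) ((-(x ^ 2)⁻¹) • ContinuousLinearMap.fst ℝ ℝ ℝ)
      (x, t) :=
    (hasDerivAt_inv hx).comp_hasFDerivAt (x, t) hasFDerivAt_fst
  have hL : c t • (-(x ^ 2)⁻¹ • ContinuousLinearMap.fst ℝ ℝ ℝ)
      + x⁻¹ • c' • ContinuousLinearMap.snd ℝ ℝ ℝ = (c' / x) • ContinuousLinearMap.snd ℝ ℝ ℝ - (c t / x ^ 2) • ContinuousLinearMap.fst ℝ ℝ ℝ := by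
    ext <;> simp <;> ring
  simpa only [div_eq_mul_inv, hL] using (hnum.fun_mul hinv).congr_fderiv hL

theorem dampedBurgersResidual_rpow_div_fst {lam k : ℝ} {c : ℝ → ℝ} {x t : ℝ} (hk : k ≠ 0)
    (hc : HasDerivAt c (lam * k * c t + 1) t) (hx : x ≠ 0) (hpos : 0 < c t / x) :
    dampedBurgersResidual lam k (fun p => (c p.2 / p.1) ^ (-(1 / k))) (x, t) = 0 := by
  rw [dampedBurgersResidual_rpow_neg_inv hk (hasFDerivAt_div_fst_of_hasDerivAt hc hx) hpos]
  simp only [sub_apply, smul_apply, ContinuousLinearMap.coe_fst', ContinuousLinearMap.coe_snd',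
    smul_eq_mul]
  field_simp
  ring

theorem hasDerivAt_mul_exp_sub_inv {a : ℝ} (A t : ℝ) (ha : a ≠ 0) :
    HasDerivAt (fun s => A * exp (a * s) - 1 / a) (a * (A * exp (a * t) - 1 / a) + 1) t := by
  refine ((((hasDerivAt_id t).const_mul a).exp.const_mul A).sub_const _).congr_deriv ?_
  simp only [id, mul_sub, mul_one_div_cancel ha]
  ring

/-- the function
`u(x,t) = (A e^{λkt}/x − 1/(λkx))^{−1/k}` satisfies
`u_t + u^k·u_x + λ·u = 0` at every point with `x ≠ 0` at which the base
`A e^{λkt}/x − 1/(λkx)` is positive. -/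
theorem case7_M3_invariant_solution
    (lam k A : ℝ) (hlam : lam ≠ 0) (hk : k ≠ 0) :
    ∀ u : ℝ × ℝ → ℝ,
      u = (fun p : ℝ × ℝ =>
        (A * exp (lam * k * p.2) / p.1 - 1 / (lam * k * p.1)) ^ (-(1 / k))) →
      ∀ x t : ℝ, x ≠ 0 →
        0 < A * exp (lam * k * t) / x - 1 / (lam * k * x) →
        fderiv ℝ u (x, t) (0, 1) + u (x, t) ^ k * fderiv ℝ u (x, t) (1, 0)
          + lam * u (x, t) = 0 := by
  rintro u rfl x t hx hpos
  have hbase : ∀ y s : ℝ, A * exp (lam * k * s) / y - 1 / (lam * k * y) =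
      (A * exp (lam * k * s) - 1 / (lam * k)) / y := fun y s => by
    rw [sub_div, div_div]
  simp only [hbase] at hpos ⊢
  exact dampedBurgersResidual_rpow_div_fst hk
    (hasDerivAt_mul_exp_sub_inv A t (mul_ne_zero hlam hk)) hx hpos
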